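/- Let B be a bounded operator on ℓ²-type block space with blocks B_{jk} (P_j B P_k) satisfying B_{jk} = 0 for |j − k| > p₀, and ‖B‖ ≤ q < 1. Then for all indices j, k, ‖((1 − B)^{-1})_{jk}‖ ≤ (1 − q)^{-1} q^{⌈|j−k|/p₀⌉}, in particular the inverse of 1 − B has exponentially decaying off-diagonal blocks. -/

import Mathlib

open ContinuousLinearMap

/-!
Truncating the Neumann series gives `R = ∑_{s<m} Bˢ + Bᵐ R` for every `m`. A product of block
operators of band widths `a` and `c` has band width `a + c`, so `Bˢ` has band width `s p₀` and the
`(j, k)` block of every term of the finite sum vanishes once `m = ⌈|j - k| / p₀⌉`. Hence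
`P_j R P_k = P_j Bᵐ R P_k`, whose norm is at most `qᵐ ‖R‖ ≤ qᵐ / (1 - q)`.
-/

section NeumannSeries

variable {A : Type*}

theorem eq_geom_sum_add_pow_mul_of_one_sub_mul_eq_one [Ring A] {x r : A}
    (h : (1 - x) * r = 1) (m : ℕ) :
    r = ∑ i ∈ Finset.range m, x ^ i + x ^ m * r := by
  calc r = ((∑ i ∈ Finset.range m, x ^ i) * (1 - x) + x ^ m) * r := by
        rw [geom_sum_mul_neg, sub_add_cancel, one_mul]
    _ = ∑ i ∈ Finset.range m, x ^ i + x ^ m * r := by rw [add_mul, mul_assoc, h, mul_one]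

theorem norm_pow_mul_le [SeminormedRing A] (x r : A) (m : ℕ) : ‖x ^ m * r‖ ≤ ‖x‖ ^ m * ‖r‖ := by
  induction m with
  | zero => simp
  | succ m ih =>
    calc ‖x ^ (m + 1) * r‖ = ‖x * (x ^ m * r)‖ := by rw [pow_succ', mul_assoc]
      _ ≤ ‖x‖ * (‖x‖ ^ m * ‖r‖) := (norm_mul_le _ _).trans (by gcongr)
      _ = ‖x‖ ^ (m + 1) * ‖r‖ := by ring

theorem norm_le_of_one_sub_mul_eq_one [SeminormedRing A] {x r : A} (h : (1 - x) * r = 1)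
    {q : ℝ} (hx : ‖x‖ ≤ q) (hq : q < 1) : ‖r‖ ≤ ‖(1 : A)‖ / (1 - q) := by
  have hr : r = 1 + x * r := by
    simpa using eq_geom_sum_add_pow_mul_of_one_sub_mul_eq_one h 1
  have : ‖r‖ ≤ ‖(1 : A)‖ + q * ‖r‖ :=
    calc ‖r‖ = ‖1 + x * r‖ := congrArg _ hr
      _ ≤ ‖(1 : A)‖ + ‖x‖ * ‖r‖ := (norm_add_le _ _).trans (by gcongr; exact norm_mul_le _ _)
      _ ≤ ‖(1 : A)‖ + q * ‖r‖ := by gcongr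
  rw [le_div_iff₀ (by linarith)]
  linarith

end NeumannSeries

section BlockBanded

variable {R E : Type*} [Semiring R] [TopologicalSpace E] [AddCommMonoid E] [Module R E]
  {P : ℕ → E →L[R] E}

def IsBlockBanded (P : ℕ → E →L[R] E) (w : ℕ) (A : E →L[R] E) : Prop :=
  ∀ j k : ℕ, (w : ℤ) < |(j : ℤ) - (k : ℤ)| → P j ∘L A ∘L P k = 0

theorem isBlockBanded_one (hPorth : ∀ j k, j ≠ k → P j ∘L P k = 0) : IsBlockBanded P 0 1 := by
  intro j k hjk
  exact hPorth j k (by rintro rfl; simp at hjk)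

theorem IsBlockBanded.mul [T2Space E] (hPsum : ∀ x : E, HasSum (fun k => P k x) x)
    {a c : ℕ} {A C : E →L[R] E} (hA : IsBlockBanded P a A) (hC : IsBlockBanded P c C) :
    IsBlockBanded P (a + c) (A * C) := by
  intro j k hjk
  ext x
  have hterm : ∀ l, (P j ∘L A) (P l (C (P k x))) = 0 := by
    intro l
    by_cases hjl : (a : ℤ) < |(j : ℤ) - (l : ℤ)|
    · exact congrArg (· (C (P k x))) (hA j l hjl)
    · have hlk : (c : ℤ) < |(l : ℤ) - (k : ℤ)| := by
        have := abs_sub_le (j : ℤ) l k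
        push_cast at hjk
        linarith
      change (P j ∘L A) ((P l ∘L C ∘L P k) x) = 0
      rw [hC l k hlk, zero_apply, map_zero]
  have hsum := (hPsum (C (P k x))).mapL (P j ∘L A)
  simp only [hterm] at hsum
  exact hsum.unique hasSum_zero

theorem IsBlockBanded.pow [T2Space E] (hPorth : ∀ j k, j ≠ k → P j ∘L P k = 0)
    (hPsum : ∀ x : E, HasSum (fun k => P k x) x) {w : ℕ} {A : E →L[R] E}
    (hA : IsBlockBanded P w A) (s : ℕ) : IsBlockBanded P (s * w) (A ^ s) := by
  induction s with
  | zero => simpa using isBlockBanded_one hPorth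
  | succ s ih => simpa [pow_succ, Nat.succ_mul] using ih.mul hPsum hA

end BlockBanded

theorem Nat.mul_lt_of_lt_ceil_div {K : Type*} [Field K] [LinearOrder K] [IsStrictOrderedRing K]
    [FloorSemiring K] {x : K} {p s : ℕ} (hs : s < ⌈x / p⌉₊) : (s * p : K) < x := by
  rcases p.eq_zero_or_pos with rfl | hp
  · simp at hs
  · exact (lt_div_iff₀ (by exact_mod_cast hp)).mp (Nat.lt_ceil.mp hs)

theorem stmt_3_general
    {E : Type*} [NormedAddCommGroup E] [InnerProductSpace ℂ E] [CompleteSpace E]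
    (B : E →L[ℂ] E)
    (P : ℕ → E →L[ℂ] E)
    (hPsa : ∀ k, IsSelfAdjoint (P k)) (hPidem : ∀ k, P k ∘L P k = P k)
    (hPorth : ∀ j k, j ≠ k → P j ∘L P k = 0)
    (hPsum : ∀ x : E, HasSum (fun k => P k x) x)
    (p₀ : ℕ)
    (hband : ∀ j k : ℕ, (p₀ : ℤ) < |(j : ℤ) - (k : ℤ)| → P j ∘L B ∘L P k = 0)
    (q : ℝ) (hq : ‖B‖ ≤ q) (hq1 : q < 1)
    (R : E →L[ℂ] E)
    (hR2 : (1 - B) ∘L R = 1) :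
    ∀ j k : ℕ,
      ‖P j ∘L R ∘L P k‖
        ≤ (1 - q)⁻¹ * q ^ (⌈((|(j : ℤ) - (k : ℤ)| : ℤ) : ℝ) / (p₀ : ℝ)⌉₊) := by
  intro j k
  set m := ⌈((|(j : ℤ) - (k : ℤ)| : ℤ) : ℝ) / (p₀ : ℝ)⌉₊
  have hvanish : ∀ s ∈ Finset.range m, P j * (B ^ s * P k) = 0 := fun s hs =>
    IsBlockBanded.pow hPorth hPsum hband s j k
      (by exact_mod_cast Nat.mul_lt_of_lt_ceil_div (Finset.mem_range.mp hs))
  have hblock : P j ∘L R ∘L P k = P j * (B ^ m * R) * P k := by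
    change P j * (R * P k) = _
    conv_lhs => rw [eq_geom_sum_add_pow_mul_of_one_sub_mul_eq_one hR2 m]
    rw [add_mul, mul_add, Finset.sum_mul, Finset.mul_sum, Finset.sum_eq_zero hvanish, zero_add,
      mul_assoc, mul_assoc, mul_assoc]
  have hproj : ∀ i, ‖P i‖ ≤ 1 := fun i => IsStarProjection.norm_le _ ⟨hPidem i, hPsa i⟩
  have hR : ‖R‖ ≤ (1 - q)⁻¹ :=
    (norm_le_of_one_sub_mul_eq_one hR2 hq hq1).trans <| by
      rw [inv_eq_one_div]; gcongr; exact norm_id_le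
  have hq0 : 0 ≤ q := (norm_nonneg B).trans hq
  calc ‖P j ∘L R ∘L P k‖ ≤ ‖P j‖ * ‖B ^ m * R‖ * ‖P k‖ := by
        rw [hblock]; exact (norm_mul_le _ _).trans (by gcongr; exact norm_mul_le _ _)
    _ ≤ 1 * (q ^ m * (1 - q)⁻¹) * 1 := by
        gcongr
        exacts [hproj j, (norm_pow_mul_le B R m).trans (by gcongr), hproj k]
    _ = (1 - q)⁻¹ * q ^ m := by ring

/-- if `B` is a banded block operator (`B_{jk} = 0` for `|j − k| > p₀`) with
`‖B‖ ≤ q < 1`, then the blocks of `(1 − B)⁻¹` decay exponentially off the diagonal: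
`‖((1 − B)⁻¹)_{jk}‖ ≤ (1 − q)⁻¹ q^{⌈|j−k|/p₀⌉}`. -/
theorem stmt_3
    {E : Type*} [NormedAddCommGroup E] [InnerProductSpace ℂ E] [CompleteSpace E]
    (B : E →L[ℂ] E)
    (P : ℕ → E →L[ℂ] E)
    (hPsa : ∀ k, IsSelfAdjoint (P k)) (hPidem : ∀ k, P k ∘L P k = P k)
    (hPorth : ∀ j k, j ≠ k → P j ∘L P k = 0)
    (hPsum : ∀ x : E, HasSum (fun k => P k x) x)
    (p₀ : ℕ) (hp₀ : 0 < p₀)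
    (hband : ∀ j k : ℕ, (p₀ : ℤ) < |(j : ℤ) - (k : ℤ)| → P j ∘L B ∘L P k = 0)
    (q : ℝ) (hq : ‖B‖ ≤ q) (hq1 : q < 1)
    (R : E →L[ℂ] E)
    (hR1 : R ∘L (1 - B) = 1) (hR2 : (1 - B) ∘L R = 1) :
    ∀ j k : ℕ,
      ‖P j ∘L R ∘L P k‖
        ≤ (1 - q)⁻¹ * q ^ (⌈((|(j : ℤ) - (k : ℤ)| : ℤ) : ℝ) / (p₀ : ℝ)⌉₊) :=
  stmt_3_general B P hPsa hPidem hPorth hPsum p₀ hband q hq hq1 R hR2
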